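/- For an affine model f(x) = wᵀx + b on ℝⁿ with value function v(S) = f(x_S, x̄_{S̄}) (features in S take their true values, features outside S take baseline values x̄), the Shapley value of feature i is φ(i) = wᵢ(xᵢ − x̄ᵢ). -/

import Mathlib

open Finset

lemma shapley_coeff_sum {n : ℕ} (i : Fin n) :
    ∑ S ∈ (Finset.univ.erase i).powerset,
      ((S.card.factorial * (n - S.card - 1).factorial : ℝ) / n.factorial) = 1 := by
  have hn : 0 < n := i.pos
  have hcard : (Finset.univ.erase i).card = n - 1 := by
    simp [card_erase_of_mem, card_univ]
  rw [Finset.sum_powerset]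
  have : ∀ j ∈ range ((Finset.univ.erase i).card + 1),
      ∑ S ∈ powersetCard j (Finset.univ.erase i),
        ((S.card.factorial * (n - S.card - 1).factorial : ℝ) / n.factorial) = (1 : ℝ) / n := by
    intro j hj
    rw [mem_range, hcard] at hj
    have hsum : ∑ S ∈ powersetCard j (Finset.univ.erase i),
        ((S.card.factorial * (n - S.card - 1).factorial : ℝ) / n.factorial) =
        ((n-1).choose j) * ((j.factorial * (n - j - 1).factorial : ℝ) / n.factorial) := by
      rw [Finset.sum_congr rfl (fun S hS => by
        rw [(Finset.mem_powersetCard.1 hS).2]), Finset.sum_const, card_powersetCard, hcard,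
        nsmul_eq_mul]
    rw [hsum]
    have hj' : j ≤ n - 1 := Nat.lt_succ_iff.1 hj
    have hch : ((n-1).choose j : ℝ) = (n-1).factorial / (j.factorial * ((n-1) - j).factorial) := by
      rw [Nat.choose_eq_factorial_div_factorial hj']
      rw [Nat.cast_div (Nat.factorial_mul_factorial_dvd_factorial hj') (by positivity)]
      push_cast; ring
    have hnn : n - 1 - j = n - j - 1 := by omega
    have hfact : (n.factorial : ℝ) = n * (n-1).factorial := by
      rw [← Nat.succ_pred_eq_of_pos hn]
      simp [Nat.factorial_succ, Nat.succ_pred_eq_of_pos hn]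
    rw [hch, hnn, hfact]
    have h1 : (j.factorial : ℝ) ≠ 0 := by positivity
    have h2 : ((n - j - 1).factorial : ℝ) ≠ 0 := by positivity
    have h3 : ((n-1).factorial : ℝ) ≠ 0 := by positivity
    have h4 : (n : ℝ) ≠ 0 := by positivity
    field_simp
  rw [Finset.sum_congr rfl this, Finset.sum_const, card_range, hcard, nsmul_eq_mul]
  have h4 : (n : ℝ) ≠ 0 := by positivity
  rw [Nat.sub_add_cancel hn]
  field_simp

/-- Shapley values of an affine model: `φ(i) = wᵢ(xᵢ − x̄ᵢ)`. -/
theorem shapley_affine {n : ℕ} (x xb w : Fin n → ℝ) (b : ℝ) (i : Fin n) :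
    ∑ S ∈ (Finset.univ.erase i).powerset,
      ((S.card.factorial * (n - S.card - 1).factorial : ℝ) / n.factorial) *
        ((∑ j, w j * (if j ∈ insert i S then x j else xb j) + b)
          - (∑ j, w j * (if j ∈ S then x j else xb j) + b)) =
      w i * (x i - xb i) := by
  have key : ∀ S ∈ (Finset.univ.erase i).powerset,
      ((S.card.factorial * (n - S.card - 1).factorial : ℝ) / n.factorial) *
        ((∑ j, w j * (if j ∈ insert i S then x j else xb j) + b)
          - (∑ j, w j * (if j ∈ S then x j else xb j) + b)) =
      ((S.card.factorial * (n - S.card - 1).factorial : ℝ) / n.factorial) *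
        (w i * (x i - xb i)) := by
    intro S hS
    have hiS : i ∉ S := fun h => (notMem_erase i _) (Finset.mem_powerset.1 hS h)
    congr 1
    have : ((∑ j, w j * (if j ∈ insert i S then x j else xb j)) -
        (∑ j, w j * (if j ∈ S then x j else xb j))) =
        ∑ j, (if j = i then w i * (x i - xb i) else 0) := by
      rw [← Finset.sum_sub_distrib]
      refine Finset.sum_congr rfl fun j _ => ?_
      by_cases hj : j = i
      · subst hj; simp [hiS]; ring
      · simp [Finset.mem_insert, hj]
    rw [show (∑ j, w j * (if j ∈ insert i S then x j else xb j) + b)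
          - (∑ j, w j * (if j ∈ S then x j else xb j) + b) =
        (∑ j, w j * (if j ∈ insert i S then x j else xb j)) -
        (∑ j, w j * (if j ∈ S then x j else xb j)) by ring, this,
      Finset.sum_ite_eq' Finset.univ i]
    simp
  rw [Finset.sum_congr rfl key, ← Finset.sum_mul, shapley_coeff_sum i, one_mul]
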